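/- arXiv:1705.04652 — 2 statements merged into one kernel-verified Lean document; each statement's English description precedes it below -/
import Mathlib

section
/- Let ε_1, ε_2 ∈ R^3 be unit vectors. Then the 16×16 matrix M = I⊗I - (1/2)(α·ε_1)⊗(α·ε_1) - (1/2)(α·ε_2)⊗(α·ε_2) acting on C^4 ⊗ C^4 is positive semidefinite. -/
open scoped BigOperators ComplexOrder Kronecker
open Complex

/-- The Pauli matrices `σ₁, σ₂, σ₃`. -/
noncomputable def pauli : Fin 3 → Matrix (Fin 2) (Fin 2) ℂ :=
  ![!![0, 1; 1, 0], !![0, -I; I, 0], !![1, 0; 0, -1]]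

/-- The Dirac alpha matrices `αᵢ = [[0, σᵢ],[σᵢ, 0]]`. -/
noncomputable def alphaMat (i : Fin 3) : Matrix (Fin 2 ⊕ Fin 2) (Fin 2 ⊕ Fin 2) ℂ :=
  Matrix.fromBlocks 0 (pauli i) (pauli i) 0

/-- The contraction `α·ε = Σᵢ εᵢ αᵢ`. -/
noncomputable def alphaDot (ε : Fin 3 → ℝ) : Matrix (Fin 2 ⊕ Fin 2) (Fin 2 ⊕ Fin 2) ℂ :=
  ∑ i, (ε i : ℂ) • alphaMat i

open Matrix

noncomputable def sigmaDot (ε : Fin 3 → ℝ) : Matrix (Fin 2) (Fin 2) ℂ :=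
  ∑ i, (ε i : ℂ) • pauli i

lemma sigmaDot_sq (ε : Fin 3 → ℝ) (h : ε 0 ^ 2 + ε 1 ^ 2 + ε 2 ^ 2 = 1) :
    sigmaDot ε * sigmaDot ε = 1 := by
  have h' : (ε 0 : ℂ) ^ 2 + (ε 1 : ℂ) ^ 2 + (ε 2 : ℂ) ^ 2 = 1 := by
    exact_mod_cast congrArg (Complex.ofReal) h
  ext i j
  fin_cases i <;> fin_cases j <;>
    simp [sigmaDot, pauli, Matrix.mul_apply, Fin.sum_univ_three, Matrix.one_apply] <;>
    (first | ring1 | linear_combination h' - (ε 1 : ℂ) ^ 2 * Complex.I_sq)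

lemma alphaDot_eq (ε : Fin 3 → ℝ) :
    alphaDot ε = Matrix.fromBlocks 0 (sigmaDot ε) (sigmaDot ε) 0 := by
  unfold alphaDot alphaMat sigmaDot
  ext (i | i) (j | j) <;>
    simp [Matrix.sum_apply, Fin.sum_univ_three, Matrix.fromBlocks]

lemma alphaDot_sq (ε : Fin 3 → ℝ) (h : ε 0 ^ 2 + ε 1 ^ 2 + ε 2 ^ 2 = 1) :
    alphaDot ε * alphaDot ε = 1 := by
  rw [alphaDot_eq, Matrix.fromBlocks_multiply]
  simp [sigmaDot_sq ε h, Matrix.fromBlocks_one]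

lemma pauli_herm (i : Fin 3) : (pauli i)ᴴ = pauli i := by
  fin_cases i <;>
    · ext a b
      fin_cases a <;> fin_cases b <;> simp [pauli, Matrix.conjTranspose_apply]

lemma alphaDot_herm (ε : Fin 3 → ℝ) : (alphaDot ε)ᴴ = alphaDot ε := by
  unfold alphaDot
  rw [Matrix.conjTranspose_sum]
  refine Finset.sum_congr rfl fun i _ => ?_
  rw [Matrix.conjTranspose_smul]
  unfold alphaMat
  rw [Matrix.fromBlocks_conjTranspose, pauli_herm]
  simp

lemma half_B_sq (ε : Fin 3 → ℝ) (h : ε 0 ^ 2 + ε 1 ^ 2 + ε 2 ^ 2 = 1) :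
    ((1/2 : ℂ) • (alphaDot ε ⊗ₖ 1 - 1 ⊗ₖ alphaDot ε))ᴴ *
      ((1/2 : ℂ) • (alphaDot ε ⊗ₖ 1 - 1 ⊗ₖ alphaDot ε))
    = (1/2 : ℂ) • ((1 : Matrix (Fin 2 ⊕ Fin 2) (Fin 2 ⊕ Fin 2) ℂ) ⊗ₖ 1
        - alphaDot ε ⊗ₖ alphaDot ε) := by
  have hH : (alphaDot ε ⊗ₖ (1 : Matrix (Fin 2 ⊕ Fin 2) (Fin 2 ⊕ Fin 2) ℂ)
      - 1 ⊗ₖ alphaDot ε)ᴴ = alphaDot ε ⊗ₖ 1 - 1 ⊗ₖ alphaDot ε := by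
    have hA : ∀ a c, (starRingEnd ℂ) (alphaDot ε c a) = alphaDot ε a c := fun a c =>
      congrFun (congrFun (alphaDot_herm ε) a) c
    ext ⟨a, b⟩ ⟨c, d⟩
    simp only [Matrix.conjTranspose_apply, Matrix.sub_apply, Matrix.kroneckerMap_apply,
      Matrix.one_apply, mul_ite, ite_mul, mul_one, mul_zero, one_mul, zero_mul,
      star_zero, Complex.star_def, map_sub, apply_ite (starRingEnd ℂ),
      map_zero, hA, eq_comm]
  rw [Matrix.conjTranspose_smul, hH, Matrix.smul_mul, Matrix.mul_smul, smul_smul,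
    sub_mul, mul_sub, mul_sub]
  simp only [← Matrix.mul_kronecker_mul]
  rw [alphaDot_sq ε h]
  simp only [Matrix.one_mul, Matrix.mul_one]
  have hs : star (1/2 : ℂ) = 1/2 := by simp
  rw [hs]
  module

/-- for unit vectors `ε₁, ε₂ ∈ ℝ³`, the `16×16` matrix
`M = I⊗I - ½ (α·ε₁)⊗(α·ε₁) - ½ (α·ε₂)⊗(α·ε₂)` on `ℂ⁴ ⊗ ℂ⁴` is positive
semidefinite. -/
theorem coulomb_current_matrix_posSemidef (ε₁ ε₂ : Fin 3 → ℝ)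
    (hε₁ : ε₁ 0 ^ 2 + ε₁ 1 ^ 2 + ε₁ 2 ^ 2 = 1)
    (hε₂ : ε₂ 0 ^ 2 + ε₂ 1 ^ 2 + ε₂ 2 ^ 2 = 1) :
    ((1 : Matrix (Fin 2 ⊕ Fin 2) (Fin 2 ⊕ Fin 2) ℂ) ⊗ₖ 1
      - (1 / 2 : ℂ) • (alphaDot ε₁ ⊗ₖ alphaDot ε₁)
      - (1 / 2 : ℂ) • (alphaDot ε₂ ⊗ₖ alphaDot ε₂)).PosSemidef := by
  have key : ((1 : Matrix (Fin 2 ⊕ Fin 2) (Fin 2 ⊕ Fin 2) ℂ) ⊗ₖ 1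
      - (1 / 2 : ℂ) • (alphaDot ε₁ ⊗ₖ alphaDot ε₁)
      - (1 / 2 : ℂ) • (alphaDot ε₂ ⊗ₖ alphaDot ε₂))
    = ((1/2 : ℂ) • (alphaDot ε₁ ⊗ₖ 1 - 1 ⊗ₖ alphaDot ε₁))ᴴ *
        ((1/2 : ℂ) • (alphaDot ε₁ ⊗ₖ 1 - 1 ⊗ₖ alphaDot ε₁))
      + ((1/2 : ℂ) • (alphaDot ε₂ ⊗ₖ 1 - 1 ⊗ₖ alphaDot ε₂))ᴴ *
        ((1/2 : ℂ) • (alphaDot ε₂ ⊗ₖ 1 - 1 ⊗ₖ alphaDot ε₂)) := by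
    rw [half_B_sq ε₁ hε₁, half_B_sq ε₂ hε₂]
    module
  rw [key]
  exact (Matrix.posSemidef_conjTranspose_mul_self _).add
    (Matrix.posSemidef_conjTranspose_mul_self _)
end

section
/- For unit vectors ε_1, ε_2 ∈ R^3, the matrix 4M = (I-α·ε_1)⊗(I+α·ε_1) + (I+α·ε_1)⊗(I-α·ε_1) + (I-α·ε_2)⊗(I+α·ε_2) + (I+α·ε_2)⊗(I-α·ε_2), i.e., M = I⊗I - (1/2)(α·ε_1)⊗(α·ε_1) - (1/2)(α·ε_2)⊗(α·ε_2); in particular M is a sum of four tensor products of positive semidefinite matrices and hence positive semidefinite. -/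
/-!
Because `α·ε` is Hermitian with `(α·ε)² = |ε|² I = I`, each of `I ± α·ε` equals half its own
Gram matrix `(I ± α·ε)ᴴ (I ± α·ε)`, so it is positive semidefinite. Expanding
`(B - A) ⊗ (B + A) + (B + A) ⊗ (B - A) = 2 (B ⊗ B - A ⊗ A)` with `B = I` gives the identity for
`4M`, and Kronecker products and sums of positive semidefinite matrices are positive semidefinite.
-/

open scoped BigOperators ComplexOrder Kronecker
open Complex

/-- The matrix `M = I⊗I - ½ (α·ε₁)⊗(α·ε₁) - ½ (α·ε₂)⊗(α·ε₂)`. -/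
noncomputable def Mmat (ε₁ ε₂ : Fin 3 → ℝ) :
    Matrix ((Fin 2 ⊕ Fin 2) × (Fin 2 ⊕ Fin 2)) ((Fin 2 ⊕ Fin 2) × (Fin 2 ⊕ Fin 2)) ℂ :=
  (1 : Matrix (Fin 2 ⊕ Fin 2) (Fin 2 ⊕ Fin 2) ℂ) ⊗ₖ 1
    - (1 / 2 : ℂ) • (alphaDot ε₁ ⊗ₖ alphaDot ε₁)
    - (1 / 2 : ℂ) • (alphaDot ε₂ ⊗ₖ alphaDot ε₂)

open Matrix

section HermitianInvolution

variable {𝕜 n : Type*} [RCLike 𝕜] [Fintype n] [DecidableEq n]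
  {A : Matrix n n 𝕜}

theorem Matrix.IsHermitian.posSemidef_one_add_of_mul_self_eq_one (hA : A.IsHermitian)
    (hA₂ : A * A = 1) : (1 + A).PosSemidef := by
  have hsq : (1 + A)ᴴ * (1 + A) = (2 : 𝕜) • (1 + A) := by
    rw [conjTranspose_add, hA.eq, conjTranspose_one, add_mul, mul_add, mul_add, hA₂, two_smul,
      Matrix.one_mul, Matrix.mul_one, Matrix.one_mul]
    abel
  have h : 1 + A = (2⁻¹ : 𝕜) • ((1 + A)ᴴ * (1 + A)) := by
    rw [hsq, smul_smul, inv_mul_cancel₀ two_ne_zero, one_smul]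
  rw [h]
  exact (posSemidef_conjTranspose_mul_self _).smul (inv_nonneg.mpr zero_le_two)

theorem Matrix.IsHermitian.posSemidef_one_sub_of_mul_self_eq_one (hA : A.IsHermitian)
    (hA₂ : A * A = 1) : (1 - A).PosSemidef := by
  simpa [sub_eq_add_neg] using hA.neg.posSemidef_one_add_of_mul_self_eq_one (by simpa using hA₂)

end HermitianInvolution

theorem Matrix.sub_kronecker_add_add_add_kronecker_sub {α l m : Type*} [CommRing α]
    (A B : Matrix l m α) :
    (B - A) ⊗ₖ (B + A) + (B + A) ⊗ₖ (B - A) = (2 : α) • (B ⊗ₖ B - A ⊗ₖ A) := by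
  ext ⟨i, j⟩ ⟨k, k'⟩
  simp only [add_apply, sub_apply, smul_apply, kronecker_apply, smul_eq_mul]
  ring

noncomputable def pauliDot (ε : Fin 3 → ℝ) : Matrix (Fin 2) (Fin 2) ℂ :=
  ∑ i, (ε i : ℂ) • pauli i

theorem alphaDot_eq_fromBlocks (ε : Fin 3 → ℝ) :
    alphaDot ε = fromBlocks 0 (pauliDot ε) (pauliDot ε) 0 := by
  simp [alphaDot, pauliDot, alphaMat, Fin.sum_univ_succ, fromBlocks_smul, fromBlocks_add]

theorem isHermitian_pauliDot (ε : Fin 3 → ℝ) : (pauliDot ε).IsHermitian := by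
  ext i j
  fin_cases i <;> fin_cases j <;> simp [pauliDot, pauli, Fin.sum_univ_succ]

theorem pauliDot_mul_self (ε : Fin 3 → ℝ) :
    pauliDot ε * pauliDot ε = ((ε 0 ^ 2 + ε 1 ^ 2 + ε 2 ^ 2 : ℝ) : ℂ) • 1 := by
  ext i j
  fin_cases i <;> fin_cases j <;>
    simp [pauliDot, pauli, Fin.sum_univ_succ, mul_apply] <;> ring_nf <;> simp [I_sq]

theorem isHermitian_alphaDot (ε : Fin 3 → ℝ) : (alphaDot ε).IsHermitian := by
  rw [alphaDot_eq_fromBlocks, IsHermitian, fromBlocks_conjTranspose, isHermitian_pauliDot]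
  simp

theorem alphaDot_mul_self (ε : Fin 3 → ℝ) :
    alphaDot ε * alphaDot ε = ((ε 0 ^ 2 + ε 1 ^ 2 + ε 2 ^ 2 : ℝ) : ℂ) • 1 := by
  rw [alphaDot_eq_fromBlocks, fromBlocks_multiply, pauliDot_mul_self, ← fromBlocks_one,
    fromBlocks_smul]
  simp

theorem four_smul_Mmat (ε₁ ε₂ : Fin 3 → ℝ) :
    (4 : ℂ) • Mmat ε₁ ε₂ =
        (1 - alphaDot ε₁) ⊗ₖ (1 + alphaDot ε₁) + (1 + alphaDot ε₁) ⊗ₖ (1 - alphaDot ε₁)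
      + (1 - alphaDot ε₂) ⊗ₖ (1 + alphaDot ε₂) + (1 + alphaDot ε₂) ⊗ₖ (1 - alphaDot ε₂) := by
  rw [add_assoc _ ((1 - alphaDot ε₂) ⊗ₖ _), sub_kronecker_add_add_add_kronecker_sub,
    sub_kronecker_add_add_add_kronecker_sub, Mmat]
  module

/-- for unit vectors `ε₁, ε₂ ∈ ℝ³`,
`4M = (I-α·ε₁)⊗(I+α·ε₁) + (I+α·ε₁)⊗(I-α·ε₁) + (I-α·ε₂)⊗(I+α·ε₂) + (I+α·ε₂)⊗(I-α·ε₂)`,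
i.e. `M` is a sum of four tensor products of positive semidefinite matrices, and
hence `M` is positive semidefinite. -/
theorem four_M_decomposition (ε₁ ε₂ : Fin 3 → ℝ)
    (hε₁ : ε₁ 0 ^ 2 + ε₁ 1 ^ 2 + ε₁ 2 ^ 2 = 1)
    (hε₂ : ε₂ 0 ^ 2 + ε₂ 1 ^ 2 + ε₂ 2 ^ 2 = 1) :
    (4 : ℂ) • Mmat ε₁ ε₂ =
        (1 - alphaDot ε₁) ⊗ₖ (1 + alphaDot ε₁) + (1 + alphaDot ε₁) ⊗ₖ (1 - alphaDot ε₁)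
      + (1 - alphaDot ε₂) ⊗ₖ (1 + alphaDot ε₂) + (1 + alphaDot ε₂) ⊗ₖ (1 - alphaDot ε₂) ∧
    (1 - alphaDot ε₁).PosSemidef ∧ (1 + alphaDot ε₁).PosSemidef ∧
    (1 - alphaDot ε₂).PosSemidef ∧ (1 + alphaDot ε₂).PosSemidef ∧
    (Mmat ε₁ ε₂).PosSemidef := by
  have hα₁ : alphaDot ε₁ * alphaDot ε₁ = 1 := by simp [alphaDot_mul_self, hε₁]
  have hα₂ : alphaDot ε₂ * alphaDot ε₂ = 1 := by simp [alphaDot_mul_self, hε₂]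
  have hsub₁ := (isHermitian_alphaDot ε₁).posSemidef_one_sub_of_mul_self_eq_one hα₁
  have hadd₁ := (isHermitian_alphaDot ε₁).posSemidef_one_add_of_mul_self_eq_one hα₁
  have hsub₂ := (isHermitian_alphaDot ε₂).posSemidef_one_sub_of_mul_self_eq_one hα₂
  have hadd₂ := (isHermitian_alphaDot ε₂).posSemidef_one_add_of_mul_self_eq_one hα₂
  refine ⟨four_smul_Mmat ε₁ ε₂, hsub₁, hadd₁, hsub₂, hadd₂, ?_⟩
  have hM : Mmat ε₁ ε₂ = (4⁻¹ : ℂ) • ((4 : ℂ) • Mmat ε₁ ε₂) := by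
    rw [smul_smul, inv_mul_cancel₀ four_ne_zero, one_smul]
  rw [hM, four_smul_Mmat]
  exact ((((hsub₁.kronecker hadd₁).add (hadd₁.kronecker hsub₁)).add (hsub₂.kronecker hadd₂)).add
    (hadd₂.kronecker hsub₂)).smul (inv_nonneg.mpr zero_le_four)
end
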